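/- arXiv:1512.03139 — 5 statements merged into one kernel-verified Lean document; each statement's English description precedes it below -/
import Mathlib

section
/- (Theorem 1) Let G and H be simple graphs on the vertex set {1,…,n} with adjacency matrices A(G) and A(H), and let φ be a bijection of {1,…,n} onto itself. Then φ is an isomorphism of G onto H if and only if for all real x_1, …, x_n, det(A(G) + X) = det(A(H) + P_φ X P_φ^⊤), where X = diag(x_1,…,x_n) and P_φ is the permutation matrix of φ (so that the diagonal entry of P_φ X P_φ^⊤ at position φ(i) is x_i). -/
open scoped Matrix
open Matrix Polynomial Finset

def permMatrix {n : ℕ} (φ : Equiv.Perm (Fin n)) : Matrix (Fin n) (Fin n) ℝ :=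
  Matrix.of fun i j => if i = φ j then (1 : ℝ) else 0

lemma permMatrix_mul {n : ℕ} (φ : Equiv.Perm (Fin n)) (M : Matrix (Fin n) (Fin n) ℝ)
    (a b : Fin n) : (permMatrix φ * M) a b = M (φ⁻¹ a) b := by
  rw [Matrix.mul_apply, Finset.sum_eq_single (φ⁻¹ a)]
  · simp [permMatrix]
  · intro k _ hk
    have : ¬ (a = φ k) := by
      intro h; exact hk (by simp [h])
    simp [permMatrix, this]
  · simp

lemma mul_permMatrixT {n : ℕ} (φ : Equiv.Perm (Fin n)) (M : Matrix (Fin n) (Fin n) ℝ)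
    (a b : Fin n) : (M * (permMatrix φ)ᵀ) a b = M a (φ⁻¹ b) := by
  rw [Matrix.mul_apply, Finset.sum_eq_single (φ⁻¹ b)]
  · simp [permMatrix]
  · intro k _ hk
    have : ¬ (b = φ k) := by
      intro h; exact hk (by simp [h])
    simp [permMatrix, this]
  · simp

lemma permMatrix_mul_permMatrixT {n : ℕ} (φ : Equiv.Perm (Fin n)) :
    permMatrix φ * (permMatrix φ)ᵀ = 1 := by
  ext a b
  rw [mul_permMatrixT, permMatrix]
  simp [Matrix.one_apply, Equiv.eq_symm_apply, eq_comm]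

lemma det_permMatrix_mul_det_permMatrixT {n : ℕ} (φ : Equiv.Perm (Fin n)) :
    (permMatrix φ).det * ((permMatrix φ)ᵀ).det = 1 := by
  rw [← Matrix.det_mul, permMatrix_mul_permMatrixT, Matrix.det_one]

lemma conj_det {n : ℕ} (φ : Equiv.Perm (Fin n)) (M : Matrix (Fin n) (Fin n) ℝ) :
    (permMatrix φ * M * (permMatrix φ)ᵀ).det = M.det := by
  rw [Matrix.det_mul, Matrix.det_mul]
  have h := det_permMatrix_mul_det_permMatrixT φ
  linear_combination M.det * h

/-- Auxiliary polynomial matrix: diagonal entries are `X` except at `i, j` where they are 0;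
off-diagonal entries are constants from `A`. -/
noncomputable def auxM {n : ℕ} (i j : Fin n) (A : Matrix (Fin n) (Fin n) ℝ) :
    Matrix (Fin n) (Fin n) ℝ[X] :=
  Matrix.of fun k l => if k = l then (if k = i ∨ k = j then 0 else X) else C (A k l)

lemma auxM_eval {n : ℕ} (i j : Fin n) (A : Matrix (Fin n) (Fin n) ℝ)
    (hA : ∀ k, A k k = 0) (c : ℝ) :
    ((auxM i j A).det).eval c =
      (A + Matrix.diagonal (fun k => if k = i ∨ k = j then 0 else c)).det := by
  have h := RingHom.map_det (evalRingHom c) (auxM i j A)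
  simp only [coe_evalRingHom] at h
  rw [h]
  congr 1
  ext k l
  by_cases hkl : k = l
  · subst hkl
    by_cases hk : k = i ∨ k = j <;>
      simp [auxM, Matrix.map_apply, hk, Matrix.diagonal_apply_eq, hA k]
  · simp [auxM, Matrix.map_apply, hkl, Matrix.diagonal_apply_ne _ hkl]

lemma auxM_prod_of_fix {n : ℕ} (i j : Fin n) (A : Matrix (Fin n) (Fin n) ℝ)
    (σ : Equiv.Perm (Fin n)) (k : Fin n) (hk : σ k = k) (hki : k = i ∨ k = j) :
    ∏ l, auxM i j A (σ l) l = 0 := by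
  apply Finset.prod_eq_zero (Finset.mem_univ k)
  rw [hk]
  simp [auxM, hki]

lemma auxM_prod_eq {n : ℕ} (i j : Fin n) (A : Matrix (Fin n) (Fin n) ℝ)
    (σ : Equiv.Perm (Fin n)) (hi : σ i ≠ i) (hj : σ j ≠ j) :
    ∏ l, auxM i j A (σ l) l =
      X ^ (Finset.univ.filter (fun k => σ k = k)).card *
        C (∏ k ∈ Finset.univ.filter (fun k => ¬ σ k = k), A (σ k) k) := by
  have step : ∀ l : Fin n, auxM i j A (σ l) l =
      if σ l = l then X else C (A (σ l) l) := by
    intro l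
    by_cases hl : σ l = l
    · have hli : l ≠ i := by rintro rfl; exact hi hl
      have hlj : l ≠ j := by rintro rfl; exact hj hl
      simp [auxM, hl, hli, hlj]
    · simp [auxM, hl]
  rw [Finset.prod_congr rfl (fun l _ => step l), Finset.prod_ite, Finset.prod_const, map_prod]

lemma auxM_det_coeff {n : ℕ} (i j : Fin n) (hij : i ≠ j) (A : Matrix (Fin n) (Fin n) ℝ)
    (hA : ∀ k, A k k = 0) :
    ((auxM i j A).det).coeff (n - 2) = -(A i j * A j i) := by
  have h2 : 2 ≤ n := by
    have := Fin.val_ne_of_ne hij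
    have hi := i.isLt; have hj := j.isLt
    omega
  rw [Matrix.det_apply, Polynomial.finset_sum_coeff]
  rw [Finset.sum_eq_single (Equiv.swap i j)]
  · have hi : Equiv.swap i j i ≠ i := by rw [Equiv.swap_apply_left]; exact hij.symm
    have hj : Equiv.swap i j j ≠ j := by rw [Equiv.swap_apply_right]; exact hij
    rw [auxM_prod_eq i j A _ hi hj]
    have hfilt : (univ.filter fun k => Equiv.swap i j k = k) = univ \ {i, j} := by
      ext k
      simp only [Finset.mem_filter, Finset.mem_univ, true_and, Finset.mem_sdiff,
        Finset.mem_insert, Finset.mem_singleton]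
      constructor
      · intro hk
        rintro (rfl | rfl)
        · exact hi hk
        · exact hj hk
      · intro hk
        push_neg at hk
        exact Equiv.swap_apply_of_ne_of_ne hk.1 hk.2
    have hcard : (univ.filter fun k => Equiv.swap i j k = k).card = n - 2 := by
      rw [hfilt, Finset.card_sdiff_of_subset (Finset.subset_univ _), Finset.card_univ, Fintype.card_fin,
        Finset.card_pair hij]
    have hnf : (univ.filter fun k => ¬ Equiv.swap i j k = k) = {i, j} := by
      ext k
      simp only [Finset.mem_filter, Finset.mem_univ, true_and, Finset.mem_insert,
        Finset.mem_singleton]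
      constructor
      · intro hk
        by_contra hc
        push_neg at hc
        exact hk (Equiv.swap_apply_of_ne_of_ne hc.1 hc.2)
      · rintro (rfl | rfl)
        · exact hi
        · exact hj
    rw [hcard, hnf, Finset.prod_pair hij, Equiv.swap_apply_left, Equiv.swap_apply_right,
      Polynomial.coeff_smul, mul_comm, coeff_C_mul, coeff_X_pow, if_pos rfl,
      Equiv.Perm.sign_swap hij]
    simp [Units.smul_def]
    ring
  · intro σ _ hσ
    by_cases hi : σ i = i
    · rw [auxM_prod_of_fix i j A σ i hi (Or.inl rfl)]; simp
    by_cases hj : σ j = j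
    · rw [auxM_prod_of_fix i j A σ j hj (Or.inr rfl)]; simp
    rw [auxM_prod_eq i j A σ hi hj, Polynomial.coeff_smul, mul_comm, coeff_C_mul, coeff_X_pow]
    have hne : ¬ (n - 2 = (univ.filter fun k => σ k = k).card) := by
      intro hcard
      have hsupp : (univ.filter fun k => σ k = k) = univ \ σ.support := by
        ext k
        simp [Equiv.Perm.mem_support]
      have hsub : σ.support ⊆ univ := Finset.subset_univ _
      have hcdiff : (univ \ σ.support).card = n - σ.support.card := by
        rw [Finset.card_sdiff_of_subset hsub, Finset.card_univ, Fintype.card_fin]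
      have hle : σ.support.card ≤ n := by
        have := Finset.card_le_card hsub
        rwa [Finset.card_univ, Fintype.card_fin] at this
      have hpair : ({i, j} : Finset (Fin n)) ⊆ σ.support := by
        intro k hk
        simp only [Finset.mem_insert, Finset.mem_singleton] at hk
        rcases hk with rfl | rfl
        · exact Equiv.Perm.mem_support.2 hi
        · exact Equiv.Perm.mem_support.2 hj
      have h2s : 2 ≤ σ.support.card := by
        have := Finset.card_le_card hpair
        rwa [Finset.card_pair hij] at this
      have hcard2 : σ.support.card = 2 := by
        rw [hsupp, hcdiff] at hcard
        omega
      obtain ⟨a, b, hab, hσab⟩ := Equiv.Perm.card_support_eq_two.mp hcard2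
      have hi' : i ∈ σ.support := Equiv.Perm.mem_support.2 hi
      have hj' : j ∈ σ.support := Equiv.Perm.mem_support.2 hj
      rw [hσab, Equiv.Perm.support_swap hab] at hi' hj'
      simp only [Finset.mem_insert, Finset.mem_singleton] at hi' hj'
      apply hσ
      rw [hσab]
      rcases hi' with rfl | rfl <;> rcases hj' with rfl | rfl
      · exact absurd rfl hij
      · rfl
      · exact (Equiv.swap_comm i j).symm  -- σ = swap a b with a = j, b = i
      · exact absurd rfl hij
    rw [if_neg hne]
    simp
  · intro h
    exact absurd (Finset.mem_univ _) h

lemma key_lemma {n : ℕ} (A B : Matrix (Fin n) (Fin n) ℝ)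
    (hA : ∀ k, A k k = 0) (hB : ∀ k, B k k = 0)
    (h : ∀ x : Fin n → ℝ, (A + Matrix.diagonal x).det = (B + Matrix.diagonal x).det)
    (i j : Fin n) (hij : i ≠ j) : A i j * A j i = B i j * B j i := by
  have hp : (auxM i j A).det = (auxM i j B).det := by
    apply Polynomial.funext
    intro c
    rw [auxM_eval i j A hA c, auxM_eval i j B hB c]
    exact h _
  have hc := congrArg (fun p => p.coeff (n - 2)) hp
  simp only [auxM_det_coeff i j hij A hA, auxM_det_coeff i j hij B hB] at hc
  linarith

lemma conj_eq {n : ℕ} (H : SimpleGraph (Fin n)) [DecidableRel H.Adj] (φ : Equiv.Perm (Fin n))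
    (x : Fin n → ℝ) :
    (H.adjMatrix ℝ + permMatrix φ * Matrix.diagonal x * (permMatrix φ)ᵀ).det =
      ((Matrix.of fun k l => H.adjMatrix ℝ (φ k) (φ l)) + Matrix.diagonal x).det := by
  have hPBP : permMatrix φ * (Matrix.of fun k l => H.adjMatrix ℝ (φ k) (φ l)) *
      (permMatrix φ)ᵀ = H.adjMatrix ℝ := by
    ext a b
    rw [mul_permMatrixT, permMatrix_mul]
    simp
  calc (H.adjMatrix ℝ + permMatrix φ * Matrix.diagonal x * (permMatrix φ)ᵀ).det
      = (permMatrix φ * ((Matrix.of fun k l => H.adjMatrix ℝ (φ k) (φ l)) + Matrix.diagonal x) *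
          (permMatrix φ)ᵀ).det := by
        rw [Matrix.mul_add, Matrix.add_mul, hPBP]
    _ = _ := conj_det φ _

/-- Theorem 1: `φ` is an isomorphism of `G` onto `H` iff for all real
`x₁,…,xₙ`, `det (A(G) + X) = det (A(H) + P_φ X P_φᵀ)` where `X = diag (x₁,…,xₙ)`. -/
theorem isomorphism_iff_modified_charPoly_eq {n : ℕ} (G H : SimpleGraph (Fin n))
    [DecidableRel G.Adj] [DecidableRel H.Adj] (φ : Equiv.Perm (Fin n)) :
    (∀ i j, G.Adj i j ↔ H.Adj (φ i) (φ j)) ↔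
      ∀ x : Fin n → ℝ,
        (G.adjMatrix ℝ + Matrix.diagonal x).det =
          (H.adjMatrix ℝ + permMatrix φ * Matrix.diagonal x * (permMatrix φ)ᵀ).det := by
  constructor
  · intro hiso x
    rw [conj_eq H φ x]
    congr 2
    ext k l
    simp [SimpleGraph.adjMatrix_apply, hiso k l]
  · intro h i j
    by_cases hij : i = j
    · subst hij
      simp
    have hdet : ∀ x : Fin n → ℝ, (G.adjMatrix ℝ + Matrix.diagonal x).det =
        ((Matrix.of fun k l => H.adjMatrix ℝ (φ k) (φ l)) + Matrix.diagonal x).det := by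
      intro x
      rw [h x, conj_eq H φ x]
    have hkey := key_lemma (G.adjMatrix ℝ) (Matrix.of fun k l => H.adjMatrix ℝ (φ k) (φ l))
      (by simp) (by simp) hdet i j hij
    have hG' : G.Adj j i ↔ G.Adj i j := G.adj_comm j i
    have hH' : H.Adj (φ j) (φ i) ↔ H.Adj (φ i) (φ j) := H.adj_comm _ _
    simp only [SimpleGraph.adjMatrix_apply, Matrix.of_apply, hG', hH'] at hkey
    by_cases hG : G.Adj i j <;> by_cases hH : H.Adj (φ i) (φ j) <;>
      simp [hG, hH] at hkey ⊢
end

section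
/- Let G and H be simple graphs on the vertex set {1,…,n} with adjacency matrices A(G) and A(H), and let φ be a bijection of {1,…,n} onto itself. Then φ is an isomorphism of G onto H if and only if A(G)_c = A(H)_{φ(c)} for every subset c of {1,…,n}, where φ(c) = {φ(i) : i ∈ c}. -/
/-- For an `n × n` matrix `A` and a subset `c` of the index set, `minorDet A c` is the
determinant of the submatrix of `A` obtained by deleting the rows and columns whose
indices belong to `c`. -/
def minorDet {n : ℕ} {R : Type*} [CommRing R] (A : Matrix (Fin n) (Fin n) R)
    (c : Finset (Fin n)) : R :=
  (A.submatrix (fun i : ↥(cᶜ) => (i : Fin n)) fun i : ↥(cᶜ) => (i : Fin n)).det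

lemma image_compl_perm {n : ℕ} (φ : Equiv.Perm (Fin n)) (s : Finset (Fin n)) :
    sᶜ.image φ = (s.image φ)ᶜ := by
  ext x
  simp only [Finset.mem_image, Finset.mem_compl]
  constructor
  · rintro ⟨a, ha, rfl⟩ ⟨b, hb, hba⟩
    exact ha (φ.injective hba ▸ hb)
  · intro hx
    exact ⟨φ.symm x, fun h => hx ⟨_, h, φ.apply_symm_apply x⟩, φ.apply_symm_apply x⟩

lemma minorDet_pair {n : ℕ} (A : Matrix (Fin n) (Fin n) ℝ) (i j : Fin n) (hij : i ≠ j) :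
    minorDet A ({i, j}ᶜ) = A i i * A j j - A i j * A j i := by
  unfold minorDet
  have hc : ({i, j}ᶜ : Finset (Fin n))ᶜ = {i, j} := compl_compl _
  have hi : i ∈ (({i, j}ᶜ : Finset (Fin n))ᶜ) := by rw [hc]; simp
  have hj : j ∈ (({i, j}ᶜ : Finset (Fin n))ᶜ) := by rw [hc]; simp
  have key : ∀ x : ↥(({i, j}ᶜ : Finset (Fin n))ᶜ), (x : Fin n) = i ∨ (x : Fin n) = j := by
    intro x
    have hx := x.2
    simp only [compl_compl] at hx
    simpa using hx
  let e : Fin 2 ≃ ↥(({i, j}ᶜ : Finset (Fin n))ᶜ) :=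
    { toFun := ![⟨i, hi⟩, ⟨j, hj⟩]
      invFun := fun x => if (x : Fin n) = i then 0 else 1
      left_inv := by
        intro x
        fin_cases x <;> simp [hij, Ne.symm hij]
      right_inv := by
        intro x
        rcases key x with h | h
        · simp [h, Subtype.ext_iff]
        · have hxi : (x : Fin n) ≠ i := by rw [h]; exact fun h' => hij h'.symm
          simp [hxi, Subtype.ext_iff, h, Ne.symm hij] }
  rw [← Matrix.det_submatrix_equiv_self e, Matrix.det_fin_two]
  simp [e, Matrix.submatrix_apply]

/-- `φ` is an isomorphism of `G` onto `H` iff `A(G)_c = A(H)_{φ(c)}`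
for every subset `c` of the vertex set. -/
theorem isomorphism_iff_all_minors_eq {n : ℕ} (G H : SimpleGraph (Fin n))
    [DecidableRel G.Adj] [DecidableRel H.Adj] (φ : Equiv.Perm (Fin n)) :
    (∀ i j, G.Adj i j ↔ H.Adj (φ i) (φ j)) ↔
      ∀ c : Finset (Fin n), minorDet (G.adjMatrix ℝ) c = minorDet (H.adjMatrix ℝ) (c.image φ) := by
  constructor
  · intro h c
    have hmem : ∀ a : Fin n, a ∈ cᶜ ↔ φ a ∈ (c.image φ)ᶜ := by
      intro a
      simp only [Finset.mem_compl, Finset.mem_image, not_iff_not]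
      constructor
      · intro ha; exact ⟨a, ha, rfl⟩
      · rintro ⟨b, hb, hba⟩; exact φ.injective hba ▸ hb
    let e : ↥(cᶜ) ≃ ↥((c.image φ)ᶜ) := Equiv.subtypeEquiv φ hmem
    unfold minorDet
    rw [← Matrix.det_submatrix_equiv_self e]
    congr 1
    ext x y
    simp only [Matrix.submatrix_apply, SimpleGraph.adjMatrix_apply, e, Equiv.subtypeEquiv_apply]
    by_cases hxy : G.Adj (x : Fin n) (y : Fin n)
    · simp [hxy, (h _ _).mp hxy]
    · have : ¬ H.Adj (φ (x : Fin n)) (φ (y : Fin n)) := fun hh => hxy ((h _ _).mpr hh)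
      simp [hxy, this]
  · intro h i j
    by_cases hij : i = j
    · subst hij; simp
    have hφij : φ i ≠ φ j := fun hh => hij (φ.injective hh)
    have := h ({i, j}ᶜ)
    rw [image_compl_perm] at this
    have himg : ({i, j} : Finset (Fin n)).image φ = {φ i, φ j} := by
      simp [Finset.image_insert]
    rw [himg, minorDet_pair _ _ _ hij, minorDet_pair _ _ _ hφij] at this
    simp only [SimpleGraph.adjMatrix_apply] at this
    by_cases hG : G.Adj i j <;> by_cases hH : H.Adj (φ i) (φ j) <;>
      simp [hG, hH] at this ⊢ <;> tauto
end

section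
/- (Proposition 2, separation inequality) Let G and H be simple graphs on n vertices with the same maximum vertex degree d ≥ 1, let A = A(G) + 2d·E and B = A(H) + 2d·E, let N be a positive integer, let φ be a permutation of {1,…,n}, let j = φ(k) for some k with 1 ≤ k ≤ n, and let ε_1, …, ε_k be rationals with ε_t = m_t/10^N, m_t an integer, 0 < m_t < 10^N. For 0 ≤ i ≤ k define A^{(i)} = A + Σ_{t=1}^{i} ε_t E_t and B^{(i)} = B + Σ_{t=1}^{i} ε_t E_{φ(t)}. Suppose det A^{(i)} = det B^{(i)} for all 0 ≤ i ≤ k−1 but det A^{(k)} ≠ det B^{(k)}. Then det(A^{(k)})_{{k}} / det A^{(k)} ≠ det(B^{(k)})_{{j}} / det B^{(k)}, and moreover |det(A^{(k)})_{{k}} / det A^{(k)} − det(B^{(k)})_{{j}} / det B^{(k)}| > 1/(10^{2kN}·(3(d+1))^{2n}). -/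
open Finset Matrix

section LinearAlgebra

variable {n : ℕ} {R : Type*} [CommRing R]

theorem minorDet_singleton_eq_det_updateRow (M : Matrix (Fin n) (Fin n) R) (k : Fin n) :
    minorDet M {k} = (M.updateRow k (Pi.single k 1)).det := by
  -- With row `k` replaced by `eₖ`, the matrix is block triangular for `Fin n = {k}ᶜ ⊔ {k}`.
  rw [twoBlockTriangular_det _ (· ∈ ({k}ᶜ : Finset (Fin n)))]
  · have hk : toSquareBlockProp (M.updateRow k (Pi.single k 1))
        (fun i => i ∉ ({k}ᶜ : Finset (Fin n))) = 1 := by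
      ext ⟨a, ha⟩ ⟨b, hb⟩
      simp only [mem_compl, mem_singleton, not_not] at ha hb
      subst ha hb
      simp [toSquareBlockProp, toBlock]
    rw [hk, det_one, mul_one, minorDet]
    convert rfl using 2
    ext ⟨a, ha⟩ ⟨b, _⟩
    simp only [mem_compl, mem_singleton] at ha
    simp [toSquareBlockProp, toBlock, updateRow_ne ha]
  · intro a ha b hb
    simp only [mem_compl, mem_singleton, not_not] at ha hb
    subst ha
    simp [Ne.symm hb]

theorem det_add_smul_single (M : Matrix (Fin n) (Fin n) R) (k : Fin n) (c : R) :
    (M + c • single k k 1).det = M.det + c * minorDet M {k} := by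
  have h : M + c • single k k 1 = M.updateRow k (M k + c • Pi.single k 1) := by
    ext a b
    rcases eq_or_ne a k with rfl | hak
    · simp [Pi.single_apply, single_apply, eq_comm]
    · simp [updateRow_ne hak, Ne.symm hak]
  rw [h, det_updateRow_add, updateRow_eq_self, det_updateRow_smul,
    minorDet_singleton_eq_det_updateRow]

theorem minorDet_add_smul_single (M : Matrix (Fin n) (Fin n) R) (k : Fin n) (c : R) :
    minorDet (M + c • single k k 1) {k} = minorDet M {k} := by
  unfold minorDet
  congr 1
  ext ⟨a, ha⟩ ⟨b, _⟩
  simp only [mem_compl, mem_singleton] at ha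
  simp [Ne.symm ha]

theorem exists_int_prod_mul_det {ι : Type*} [Fintype ι] [DecidableEq ι]
    (M : Matrix ι ι R) (v : ι → ℤ) (h : ∀ a b, ∃ z : ℤ, v a * M a b = z) :
    ∃ z : ℤ, (∏ a, (v a : R)) * M.det = z := by
  choose Z hZ using h
  refine ⟨(Matrix.of Z).det, ?_⟩
  rw [← det_mul_column, Int.cast_det]
  congr 1
  ext a b
  simp [hZ]

theorem exists_int_prod_mul_minorDet (M : Matrix (Fin n) (Fin n) R) (v : Fin n → ℤ)
    (h : ∀ a b, ∃ z : ℤ, v a * M a b = z) {κ : Fin n} (hκ : v κ = 1) :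
    ∃ z : ℤ, (∏ a, (v a : R)) * minorDet M {κ} = z := by
  rw [minorDet_singleton_eq_det_updateRow]
  refine exists_int_prod_mul_det _ v fun a b => ?_
  rcases eq_or_ne a κ with rfl | haκ
  · refine ⟨(Pi.single a 1 : Fin n → ℤ) b, ?_⟩
    rcases eq_or_ne b a with rfl | hba <;> simp [*]
  · simpa [updateRow_ne haκ] using h a b

end LinearAlgebra

section Gershgorin

variable {ι : Type*} [Fintype ι] [DecidableEq ι] {A : Matrix ι ι ℝ}

theorem Matrix.IsHermitian.exists_abs_eigenvalues_sub_le (hA : A.IsHermitian) (i : ι) :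
    ∃ a, |hA.eigenvalues i - A a a| ≤ ∑ b ∈ univ.erase a, |A a b| := by
  have hspec : hA.eigenvalues i ∈ spectrum ℝ (toLin' A) := by
    rw [show toLin' A = toLinAlgEquiv' A from rfl, AlgEquiv.spectrum_eq]
    exact hA.eigenvalues_mem_spectrum_real i
  obtain ⟨a, ha⟩ := eigenvalue_mem_ball (Module.End.HasEigenvalue.of_mem_spectrum hspec)
  exact ⟨a, by simpa [Real.dist_eq] using ha⟩

theorem Matrix.IsHermitian.det_pos_and_le (hA : A.IsHermitian) {h : ℝ}
    (hlo : ∀ a, ∑ b ∈ univ.erase a, |A a b| < A a a)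
    (hhi : ∀ a, A a a + ∑ b ∈ univ.erase a, |A a b| ≤ h) :
    0 < A.det ∧ A.det ≤ h ^ Fintype.card ι := by
  have hbounds : ∀ i, 0 < hA.eigenvalues i ∧ hA.eigenvalues i ≤ h := by
    intro i
    obtain ⟨a, ha⟩ := hA.exists_abs_eigenvalues_sub_le i
    have := abs_le.mp ha
    exact ⟨by linarith [hlo a], by linarith [hhi a]⟩
  rw [hA.det_eq_prod_eigenvalues]
  simp only [RCLike.ofReal_real_eq_id, id_eq]
  refine ⟨prod_pos fun i _ => (hbounds i).1, ?_⟩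
  calc ∏ i, hA.eigenvalues i ≤ ∏ _i : ι, h :=
        prod_le_prod (fun i _ => (hbounds i).1.le) fun i _ => (hbounds i).2
    _ = h ^ Fintype.card ι := by rw [prod_const, card_univ]

end Gershgorin

namespace SimpleGraph

variable {V : Type*} [DecidableEq V] (G : SimpleGraph V) [DecidableRel G.Adj]
  (w : V → ℝ)

theorem isHermitian_adjMatrix_add_diagonal : (G.adjMatrix ℝ + diagonal w).IsHermitian :=
  isHermitian_iff_isSymm.mpr (G.isSymm_adjMatrix.add (isSymm_diagonal w))

theorem sum_erase_abs_adjMatrix_add_diagonal [Fintype V] (a : V) :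
    ∑ b ∈ univ.erase a, |(G.adjMatrix ℝ + diagonal w) a b| = G.degree a := by
  have hoff : ∀ b ∈ univ.erase a, |(G.adjMatrix ℝ + diagonal w) a b| = G.adjMatrix ℝ a b := by
    intro b hb
    rw [Matrix.add_apply, diagonal_apply_ne _ (ne_of_mem_erase hb).symm, add_zero]
    exact abs_of_nonneg (by by_cases h : G.Adj a b <;> simp [h])
  rw [sum_congr rfl hoff, sum_erase _ (by simp)]
  simp [adjMatrix_apply, degree, neighborFinset_eq_filter, sum_boole]

theorem det_adjMatrix_add_diagonal_pos_and_le [Fintype V] {d : ℕ} (hdeg : ∀ a, G.degree a ≤ d)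
    {h : ℝ} (hw : ∀ a, (d : ℝ) < w a) (hwh : ∀ a, w a ≤ h) :
    0 < (G.adjMatrix ℝ + diagonal w).det ∧
      (G.adjMatrix ℝ + diagonal w).det ≤ (h + d) ^ Fintype.card V := by
  have hdeg' : ∀ a, (G.degree a : ℝ) ≤ d := fun a => by exact_mod_cast hdeg a
  refine (G.isHermitian_adjMatrix_add_diagonal w).det_pos_and_le (fun a => ?_) fun a => ?_ <;>
  · rw [sum_erase_abs_adjMatrix_add_diagonal]
    simp only [Matrix.add_apply, adjMatrix_apply, G.irrefl, if_false, diagonal_apply_eq, zero_add]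
    linarith [hdeg' a, hw a, hwh a]

theorem exists_int_mul_adjMatrix_add_diagonal (v : V → ℤ) (hw : ∀ a, ∃ z : ℤ, v a * w a = z)
    (a b : V) : ∃ z : ℤ, v a * (G.adjMatrix ℝ + diagonal w) a b = z := by
  rcases eq_or_ne a b with rfl | hab
  · simpa using hw a
  · refine ⟨v a * if G.Adj a b then 1 else 0, ?_⟩
    simp [diagonal_apply_ne _ hab, adjMatrix_apply]

end SimpleGraph

section Perturbation

variable {n : ℕ} (G : SimpleGraph (Fin n)) [DecidableRel G.Adj] {d : ℕ}
  (ψ : Equiv.Perm (Fin n)) (ε : Fin n → ℝ)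

-- The paper's `A⁽ⁱ⁾` is `perturbedMatrix G d 1 ε i` and `B⁽ⁱ⁾` is `perturbedMatrix H d φ ε i`.
variable (d) in
def perturbedMatrix (i : ℕ) : Matrix (Fin n) (Fin n) ℝ :=
  G.adjMatrix ℝ + (2 * d : ℝ) • (1 : Matrix (Fin n) (Fin n) ℝ) +
    ∑ t ∈ Finset.univ.filter (fun t : Fin n => t.val < i), ε t • Matrix.single (ψ t) (ψ t) 1

theorem perturbedMatrix_eq_adjMatrix_add_diagonal (i : ℕ) :
    perturbedMatrix G d ψ ε i = G.adjMatrix ℝ +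
      diagonal fun a => 2 * d + if (ψ.symm a).val < i then ε (ψ.symm a) else 0 := by
  ext a b
  simp only [perturbedMatrix, Matrix.add_apply, Matrix.sum_apply, Matrix.smul_apply, one_apply,
    diagonal_apply, single_apply, smul_eq_mul]
  rcases eq_or_ne a b with rfl | hab
  · simp [← Equiv.eq_symm_apply, sum_ite_eq']
  · have hne : ∀ c, ¬(ψ c = a ∧ ψ c = b) := fun c h => hab (h.1.symm.trans h.2)
    simp [hab, hne]

theorem perturbedMatrix_succ (k : Fin n) :
    perturbedMatrix G d ψ ε (k.val + 1) =
      perturbedMatrix G d ψ ε k.val + ε k • single (ψ k) (ψ k) 1 := by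
  have hfilter : univ.filter (fun t : Fin n => t.val < k.val + 1) =
      insert k (univ.filter fun t : Fin n => t.val < k.val) := by
    ext t
    simp only [mem_filter, mem_univ, true_and, mem_insert, Fin.ext_iff]
    omega
  rw [perturbedMatrix, perturbedMatrix, hfilter, sum_insert (by simp)]
  abel

theorem det_perturbedMatrix_pos_and_le (hd : 1 ≤ d) (hdeg : ∀ a, G.degree a ≤ d) {i : ℕ}
    (hε : ∀ t : Fin n, t.val < i → 0 ≤ ε t ∧ ε t ≤ 1) :
    0 < (perturbedMatrix G d ψ ε i).det ∧ (perturbedMatrix G d ψ ε i).det ≤ (3 * d + 1) ^ n := by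
  have hd' : (1 : ℝ) ≤ d := by exact_mod_cast hd
  have hw := fun a => show 0 ≤ (if (ψ.symm a).val < i then ε (ψ.symm a) else 0) ∧
      (if (ψ.symm a).val < i then ε (ψ.symm a) else 0) ≤ 1 by
    split_ifs with h
    exacts [hε _ h, ⟨le_rfl, zero_le_one⟩]
  rw [perturbedMatrix_eq_adjMatrix_add_diagonal]
  obtain ⟨hpos, hle⟩ := G.det_adjMatrix_add_diagonal_pos_and_le
    (fun a => 2 * d + if (ψ.symm a).val < i then ε (ψ.symm a) else 0) hdeg (h := 2 * d + 1)
    (fun a => by linarith [hw a]) (fun a => by linarith [hw a])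
  exact ⟨hpos, hle.trans_eq (by rw [Fintype.card_fin]; ring)⟩

theorem exists_int_pow_mul_det_perturbedMatrix (q : ℤ) {i : ℕ} (hi : i ≤ n)
    (hε : ∀ t : Fin n, t.val < i → ∃ z : ℤ, q * ε t = z) :
    (∃ z : ℤ, (q : ℝ) ^ i * (perturbedMatrix G d ψ ε i).det = z) ∧
      ∀ κ, i ≤ (ψ.symm κ).val →
        ∃ z : ℤ, (q : ℝ) ^ i * minorDet (perturbedMatrix G d ψ ε i) {κ} = z := by
  set v : Fin n → ℤ := fun a => if (ψ.symm a).val < i then q else 1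
  have hprod : ∏ a, (v a : ℝ) = (q : ℝ) ^ i := by
    rw [← Equiv.prod_comp ψ]
    simp only [v, Equiv.symm_apply_apply, apply_ite (Int.cast : ℤ → ℝ), Int.cast_one]
    rw [prod_ite, prod_const, prod_const_one, mul_one, Fin.card_filter_val_lt, min_eq_right hi]
  have hentries := (perturbedMatrix_eq_adjMatrix_add_diagonal G ψ ε i).symm ▸
    G.exists_int_mul_adjMatrix_add_diagonal _ v fun a => by
      by_cases h : (ψ.symm a).val < i
      · obtain ⟨z, hz⟩ := hε _ h
        exact ⟨2 * d * q + z, by simp [v, h, ← hz]; ring⟩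
      · exact ⟨2 * d, by simp [v, h]⟩
  rw [← hprod]
  exact ⟨exists_int_prod_mul_det _ v hentries,
    fun κ hκ => exists_int_prod_mul_minorDet _ v hentries (by simp [v, not_lt.mpr hκ])⟩

end Perturbation

theorem one_div_mul_sq_le_abs_div_sub_div {D a b e c U : ℝ} (hD : 0 < D) (hc : 0 < c)
    (hcD : ∃ z : ℤ, c * D = z) (hca : ∃ z : ℤ, c * a = z) (hcb : ∃ z : ℤ, c * b = z)
    (hab : a ≠ b) (hA : 0 < D + e * a) (hB : 0 < D + e * b) (hAU : D + e * a ≤ U)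
    (hBU : D + e * b ≤ U) :
    1 / (c * U) ^ 2 ≤ |a / (D + e * a) - b / (D + e * b)| := by
  have one_le_abs_of_int : ∀ x : ℝ, (∃ z : ℤ, x = z) → x ≠ 0 → 1 ≤ |x| := by
    rintro x ⟨z, rfl⟩ hz
    exact_mod_cast Int.one_le_abs (by exact_mod_cast hz)
  have hcD' : 1 ≤ c * D := by
    simpa [abs_of_pos (mul_pos hc hD)] using
      one_le_abs_of_int _ (hcD.imp fun _ h => h) (by positivity)
  have hcab : 1 ≤ c * |a - b| := by
    obtain ⟨za, hza⟩ := hca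
    obtain ⟨zb, hzb⟩ := hcb
    have := one_le_abs_of_int (c * (a - b)) ⟨za - zb, by push_cast; rw [← hza, ← hzb]; ring⟩
      (mul_ne_zero hc.ne' (sub_ne_zero.mpr hab))
    rwa [abs_mul, abs_of_pos hc] at this
  have hdiff : a / (D + e * a) - b / (D + e * b) = D * (a - b) / ((D + e * a) * (D + e * b)) := by
    rw [div_sub_div _ _ hA.ne' hB.ne']
    ring
  rw [hdiff, abs_div, abs_mul, abs_of_pos hD, abs_of_pos (mul_pos hA hB),
    div_le_div_iff₀ (pow_pos (mul_pos hc (hA.trans_le hAU)) 2) (mul_pos hA hB), one_mul]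
  calc (D + e * a) * (D + e * b) ≤ U * U := mul_le_mul hAU hBU hB.le (hA.le.trans hAU)
    _ ≤ (c * D) * (c * |a - b|) * (U * U) := le_mul_of_one_le_left (by nlinarith) (by nlinarith)
    _ = D * |a - b| * (c * U) ^ 2 := by ring

theorem sq_ten_pow_mul_pow_lt {n d N k : ℕ} (hn : n ≠ 0) :
    (((10 : ℝ) ^ N) ^ k * (3 * d + 1) ^ n) ^ 2 <
      10 ^ (2 * (k + 1) * N) * (3 * ((d : ℝ) + 1)) ^ (2 * n) :=
  calc (((10 : ℝ) ^ N) ^ k * (3 * d + 1) ^ n) ^ 2 = 10 ^ (2 * k * N) * (3 * d + 1) ^ (2 * n) := by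
        ring
    _ < 10 ^ (2 * (k + 1) * N) * (3 * ((d : ℝ) + 1)) ^ (2 * n) :=
        mul_lt_mul' (pow_le_pow_right₀ (by norm_num) (by nlinarith))
          (pow_lt_pow_left₀ (by linarith) (by positivity) (by omega)) (by positivity)
          (by positivity)

/-- Vertices are `0`-indexed: the paper's step `k` is the vertex `k : Fin n`, and `Apow i` carries
the perturbations of the vertices `t` with `t.val < i`, so the paper's `A⁽ᵏ⁾` is
`Apow (k.val + 1)`. -/
theorem prop2_separation_general {n d N : ℕ} (hd : 1 ≤ d)
    (G H : SimpleGraph (Fin n)) [DecidableRel G.Adj] [DecidableRel H.Adj]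
    (hdG : Finset.univ.sup (fun v => G.degree v) = d)
    (hdH : Finset.univ.sup (fun v => H.degree v) = d)
    (φ : Equiv.Perm (Fin n)) (k : Fin n) (j : Fin n) (hj : j = φ k)
    (m : Fin n → ℤ) (ε : Fin n → ℝ)
    (hεm : ∀ t, t ≤ k → ε t = (m t : ℝ) / 10 ^ N ∧ 0 < m t ∧ m t < 10 ^ N)
    (Apow Bpow : ℕ → Matrix (Fin n) (Fin n) ℝ)
    (hA : ∀ i, Apow i = G.adjMatrix ℝ + (2 * d : ℝ) • (1 : Matrix (Fin n) (Fin n) ℝ) +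
      ∑ t ∈ Finset.univ.filter (fun t : Fin n => t.val < i),
        ε t • Matrix.single t t 1)
    (hB : ∀ i, Bpow i = H.adjMatrix ℝ + (2 * d : ℝ) • (1 : Matrix (Fin n) (Fin n) ℝ) +
      ∑ t ∈ Finset.univ.filter (fun t : Fin n => t.val < i),
        ε t • Matrix.single (φ t) (φ t) 1)
    (hdeq : ∀ i : ℕ, i ≤ k.val → (Apow i).det = (Bpow i).det)
    (hdne : (Apow (k.val + 1)).det ≠ (Bpow (k.val + 1)).det) :
    minorDet (Apow (k.val + 1)) {k} / (Apow (k.val + 1)).det ≠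
      minorDet (Bpow (k.val + 1)) {j} / (Bpow (k.val + 1)).det ∧
    1 / (10 ^ (2 * (k.val + 1) * N) * (3 * ((d : ℝ) + 1)) ^ (2 * n)) <
      |minorDet (Apow (k.val + 1)) {k} / (Apow (k.val + 1)).det -
        minorDet (Bpow (k.val + 1)) {j} / (Bpow (k.val + 1)).det| := by
  obtain rfl : Apow = perturbedMatrix G d (Equiv.refl _) ε := funext hA
  obtain rfl : Bpow = perturbedMatrix H d φ ε := funext hB
  subst hj
  have hdegG : ∀ a, G.degree a ≤ d := fun a => hdG ▸ le_sup (f := (G.degree ·)) (mem_univ a)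
  have hdegH : ∀ a, H.degree a ≤ d := fun a => hdH ▸ le_sup (f := (H.degree ·)) (mem_univ a)
  have hε01 : ∀ t : Fin n, t.val < k.val + 1 → 0 ≤ ε t ∧ ε t ≤ 1 := by
    intro t ht
    obtain ⟨hεt, hm0, hm1⟩ := hεm t (Fin.le_def.mpr (by omega))
    have hm1' : (m t : ℝ) ≤ 10 ^ N := by exact_mod_cast hm1.le
    rw [hεt]
    exact ⟨by positivity, div_le_one_of_le₀ hm1' (by positivity)⟩
  have hεint : ∀ t : Fin n, t.val < k.val → ∃ z : ℤ, ((10 ^ N : ℤ) : ℝ) * ε t = z := by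
    intro t ht
    refine ⟨m t, ?_⟩
    rw [(hεm t (Fin.le_def.mpr ht.le)).1]
    push_cast
    field_simp
  obtain ⟨hcD, hcA⟩ :=
    exists_int_pow_mul_det_perturbedMatrix G (d := d) (Equiv.refl _) ε _ k.is_lt.le hεint
  obtain ⟨-, hcB⟩ := exists_int_pow_mul_det_perturbedMatrix H (d := d) φ ε _ k.is_lt.le hεint
  push_cast at hcD hcA hcB
  have hD := (det_perturbedMatrix_pos_and_le G (Equiv.refl _) ε hd hdegG (i := k.val)
    fun t ht => hε01 t (by omega)).1
  have hA1 := det_perturbedMatrix_pos_and_le G (Equiv.refl _) ε hd hdegG hε01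
  have hB1 := det_perturbedMatrix_pos_and_le H φ ε hd hdegH hε01
  simp only [perturbedMatrix_succ, Equiv.refl_apply, det_add_smul_single, minorDet_add_smul_single,
    ← hdeq k.val le_rfl] at hA1 hB1 hdne ⊢
  have hsep := (one_div_lt_one_div_of_lt (by positivity) (sq_ten_pow_mul_pow_lt k.pos.ne')).trans_le
    (one_div_mul_sq_le_abs_div_sub_div hD (by positivity) hcD (hcA k (by simp))
      (hcB (φ k) (by simp)) (fun h => hdne (by rw [h])) hA1.1 hB1.1 hA1.2 hB1.2)
  exact ⟨sub_ne_zero.mp (abs_pos.mp ((by positivity : (0 : ℝ) < _).trans hsep)), hsep⟩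

/-- Proposition 2, separation inequality.  Vertices are `0`-indexed:
`Apow i = A + ∑_{t < i} εₜ Eₜ` (so the paper's `A⁽ⁱ⁾` with `i` modifications is
`Apow i`, and the paper's step `k ∈ {1,…,n}` corresponds to the vertex `k : Fin n`
with `k.val + 1` modifications performed). If `det (Apow i) = det (Bpow i)` for all
`i ≤ k.val` but `det (Apow (k.val+1)) ≠ det (Bpow (k.val+1))`, then the ratios
`(A⁽ᵏ⁾)_{{k}}/det A⁽ᵏ⁾` and `(B⁽ᵏ⁾)_{{j}}/det B⁽ᵏ⁾` (with `j = φ k`) differ, by more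
than `1/(10^{2kN}·(3(d+1))^{2n})`. -/
theorem prop2_separation {n d N : ℕ} (hd : 1 ≤ d) (hN : 1 ≤ N)
    (G H : SimpleGraph (Fin n)) [DecidableRel G.Adj] [DecidableRel H.Adj]
    (hdG : Finset.univ.sup (fun v => G.degree v) = d)
    (hdH : Finset.univ.sup (fun v => H.degree v) = d)
    (φ : Equiv.Perm (Fin n)) (k : Fin n) (j : Fin n) (hj : j = φ k)
    (m : Fin n → ℤ) (ε : Fin n → ℝ)
    (hεm : ∀ t, t ≤ k → ε t = (m t : ℝ) / 10 ^ N ∧ 0 < m t ∧ m t < 10 ^ N)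
    (Apow Bpow : ℕ → Matrix (Fin n) (Fin n) ℝ)
    (hA : ∀ i, Apow i = G.adjMatrix ℝ + (2 * d : ℝ) • (1 : Matrix (Fin n) (Fin n) ℝ) +
      ∑ t ∈ Finset.univ.filter (fun t : Fin n => t.val < i),
        ε t • Matrix.single t t 1)
    (hB : ∀ i, Bpow i = H.adjMatrix ℝ + (2 * d : ℝ) • (1 : Matrix (Fin n) (Fin n) ℝ) +
      ∑ t ∈ Finset.univ.filter (fun t : Fin n => t.val < i),
        ε t • Matrix.single (φ t) (φ t) 1)
    (hdeq : ∀ i : ℕ, i ≤ k.val → (Apow i).det = (Bpow i).det)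
    (hdne : (Apow (k.val + 1)).det ≠ (Bpow (k.val + 1)).det) :
    minorDet (Apow (k.val + 1)) {k} / (Apow (k.val + 1)).det ≠
      minorDet (Bpow (k.val + 1)) {j} / (Bpow (k.val + 1)).det ∧
    1 / (10 ^ (2 * (k.val + 1) * N) * (3 * ((d : ℝ) + 1)) ^ (2 * n)) <
      |minorDet (Apow (k.val + 1)) {k} / (Apow (k.val + 1)).det -
        minorDet (Bpow (k.val + 1)) {j} / (Bpow (k.val + 1)).det| :=
  prop2_separation_general hd G H hdG hdH φ k j hj m ε hεm Apow Bpow hA hB hdeq hdne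
end

section
/- (Proposition 3, separation inequality) Let G be a simple graph on n ≥ 2 vertices with maximum vertex degree d ≥ 1, let N be a positive integer, and let ε_1, …, ε_i be rationals with ε_t = m_t/10^N, m_t an integer, 0 < m_t < 10^N, where 1 ≤ i ≤ n. Set A^{(i-1)} = A(G) + 2d·E + Σ_{t=1}^{i-1} ε_t E_t and A^{(i)} = A^{(i-1)} + ε_i E_i, and let j ≠ i be another index in {1,…,n}. If det(A^{(i-1)})_{{i}} / det A^{(i-1)} = det(A^{(i-1)})_{{j}} / det A^{(i-1)}, then |det(A^{(i)})_{{i}} / det A^{(i)} − det(A^{(i)})_{{j}} / det A^{(i)}| = ε_i · det(A^{(i-1)})_{{i,j}} / det A^{(i)} ≥ ε_i · d^{n-2}/(3(d+1))^n > 0; in particular the two ratios at step i are distinct. -/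
section Aux

open Matrix Finset

variable {ι : Type*} [Fintype ι] [DecidableEq ι]

/-- Determinant of a matrix whose `i`-th row is replaced by the standard basis vector `e_i`
equals the principal minor obtained by deleting row and column `i`. -/
lemma aux_det_updateRow_single (M : Matrix ι ι ℝ) (i : ι) :
    (M.updateRow i (Pi.single i 1)).det =
      (M.submatrix (fun x : ↥(({i} : Finset ι)ᶜ) => (x : ι))
        (fun x : ↥(({i} : Finset ι)ᶜ) => (x : ι))).det := by
  classical
  set e : ↥(({i} : Finset ι)ᶜ) ⊕ Unit ≃ ι :=
    { toFun := Sum.elim (fun x => (x : ι)) (fun _ => i)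
      invFun := fun a => if h : a = i then Sum.inr () else Sum.inl ⟨a, by simp [h]⟩
      left_inv := by
        rintro (⟨x, hx⟩ | ⟨⟩)
        · have hxi : x ≠ i := by simpa using hx
          simp [hxi]
        · simp
      right_inv := by
        intro a
        by_cases h : a = i <;> simp [h] } with he
  rw [← Matrix.det_submatrix_equiv_self e]
  have hblock : (M.updateRow i (Pi.single i 1)).submatrix e e =
      Matrix.fromBlocks
        (M.submatrix (fun x : ↥(({i} : Finset ι)ᶜ) => (x : ι))
          (fun x : ↥(({i} : Finset ι)ᶜ) => (x : ι)))
        (Matrix.of fun x _ => M (x : ι) i) 0 1 := by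
    ext x y
    rcases x with x | x <;> rcases y with y | y
    · have hxi : (x : ι) ≠ i := by
        have := x.2; simp only [Finset.mem_compl, Finset.mem_singleton] at this; exact this
      simp [he, Matrix.updateRow_apply, hxi]
    · have hxi : (x : ι) ≠ i := by
        have := x.2; simp only [Finset.mem_compl, Finset.mem_singleton] at this; exact this
      simp [he, Matrix.updateRow_apply, hxi]
    · have hyi : (y : ι) ≠ i := by
        have := y.2; simp only [Finset.mem_compl, Finset.mem_singleton] at this; exact this
      simp [he, Matrix.updateRow_apply, Pi.single_apply, Ne.symm hyi]
    · simp [he, Matrix.updateRow_apply, Pi.single_apply]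
  rw [hblock, Matrix.det_fromBlocks_zero₂₁]
  simp

/-- Adding `a` to the `(i,i)` entry changes the determinant by `a` times the principal
minor at `i`. -/
lemma aux_det_add_single (M : Matrix ι ι ℝ) (i : ι) (a : ℝ) :
    (M + a • Matrix.single i i 1).det =
      M.det + a * (M.submatrix (fun x : ↥(({i} : Finset ι)ᶜ) => (x : ι))
        (fun x : ↥(({i} : Finset ι)ᶜ) => (x : ι))).det := by
  have h1 : M + a • Matrix.single i i 1 =
      M.updateRow i (M i + a • (Pi.single i 1 : ι → ℝ)) := by
    ext x y
    by_cases hx : x = i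
    · subst hx
      simp [Matrix.updateRow_apply, Matrix.single, Pi.single_apply, eq_comm]
    · simp [Matrix.updateRow_apply, hx, Matrix.single, Ne.symm hx]
  rw [h1, Matrix.det_updateRow_add, Matrix.det_updateRow_smul, Matrix.updateRow_eq_self,
    aux_det_updateRow_single]

/-- Hadamard-type bound: the determinant is at most the product of the `ℓ¹`-norms of rows. -/
lemma aux_abs_det_le (M : Matrix ι ι ℝ) : |M.det| ≤ ∏ k, ∑ l, |M k l| := by
  classical
  rw [Matrix.det_apply]
  refine (Finset.abs_sum_le_sum_abs _ _).trans ?_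
  have habs : ∀ σ : Equiv.Perm ι, |Equiv.Perm.sign σ • ∏ x, M (σ x) x| =
      ∏ k, |M k (σ⁻¹ k)| := by
    intro σ
    have h1 : |Equiv.Perm.sign σ • ∏ x, M (σ x) x| = |∏ x, M (σ x) x| := by
      rcases Int.units_eq_one_or (Equiv.Perm.sign σ) with h | h <;> simp [h]
    rw [h1, abs_prod]
    rw [← Equiv.prod_comp σ (fun k => |M k (σ⁻¹ k)|)]
    simp
  calc ∑ σ : Equiv.Perm ι, |Equiv.Perm.sign σ • ∏ x, M (σ x) x|
      = ∑ σ : Equiv.Perm ι, ∏ k, |M k (σ⁻¹ k)| :=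
        Finset.sum_congr rfl fun σ _ => habs σ
    _ = ∑ σ : Equiv.Perm ι, ∏ k, |M k (σ k)| :=
        Fintype.sum_equiv (Equiv.inv (Equiv.Perm ι)) _ _ (fun σ => by simp)
    _ = ∑ f ∈ Finset.univ.image (fun σ : Equiv.Perm ι => (σ : ι → ι)),
          ∏ k, |M k (f k)| := by
        rw [Finset.sum_image]
        intro a _ b _ h
        exact Equiv.coe_fn_injective h
    _ ≤ ∑ f ∈ Fintype.piFinset (fun _ : ι => (Finset.univ : Finset ι)),
          ∏ k, |M k (f k)| := by
        refine Finset.sum_le_sum_of_subset_of_nonneg ?_ ?_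
        · intro f _; simp [Fintype.mem_piFinset]
        · intro f _ _; exact Finset.prod_nonneg fun _ _ => abs_nonneg _
    _ = ∏ k, ∑ l, |M k l| :=
        (Finset.prod_univ_sum (fun _ : ι => (Finset.univ : Finset ι))
          (fun k l => |M k l|)).symm

/-- Gershgorin-type bound: a symmetric real matrix which is diagonally dominant with
margin `c ≥ 0` has determinant at least `c ^ card ι`. -/
lemma aux_pow_le_det (M : Matrix ι ι ℝ) (hM : M.IsHermitian) (c : ℝ) (hc : 0 ≤ c)
    (h : ∀ k, c + ∑ l ∈ Finset.univ.erase k, |M k l| ≤ M k k) :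
    c ^ (Fintype.card ι) ≤ M.det := by
  classical
  have heig : ∀ t, c ≤ hM.eigenvalues t := by
    intro t
    set μ := hM.eigenvalues t with hμ
    set v : ι → ℝ := ⇑(hM.eigenvectorBasis t) with hv
    have hMv : M *ᵥ v = μ • v := hM.mulVec_eigenvectorBasis t
    have hvne : ∃ k, v k ≠ 0 := by
      by_contra hcon
      push_neg at hcon
      exact hM.eigenvectorBasis.orthonormal.ne_zero t (by ext k; simpa using hcon k)
    obtain ⟨k0, hk0⟩ := hvne
    have hne : (Finset.univ : Finset ι).Nonempty := ⟨k0, Finset.mem_univ k0⟩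
    obtain ⟨k, -, hk⟩ := Finset.exists_max_image Finset.univ (fun l => |v l|) hne
    have hkpos : 0 < |v k| := lt_of_lt_of_le (abs_pos.mpr hk0) (hk k0 (Finset.mem_univ k0))
    have hrow : μ * v k = ∑ l, M k l * v l := by
      have := congrFun hMv k
      simpa [Matrix.mulVec, dotProduct, mul_comm] using this.symm
    have hsplit : μ * v k - M k k * v k = ∑ l ∈ Finset.univ.erase k, M k l * v l := by
      rw [hrow, ← Finset.add_sum_erase _ _ (Finset.mem_univ k)]
      ring
    have habs : |μ - M k k| * |v k| ≤ (∑ l ∈ Finset.univ.erase k, |M k l|) * |v k| := by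
      rw [← abs_mul, sub_mul, hsplit]
      calc |∑ l ∈ Finset.univ.erase k, M k l * v l|
          ≤ ∑ l ∈ Finset.univ.erase k, |M k l * v l| := Finset.abs_sum_le_sum_abs _ _
        _ ≤ ∑ l ∈ Finset.univ.erase k, |M k l| * |v k| := by
            refine Finset.sum_le_sum fun l _ => ?_
            rw [abs_mul]
            exact mul_le_mul_of_nonneg_left (hk l (Finset.mem_univ l)) (abs_nonneg _)
        _ = (∑ l ∈ Finset.univ.erase k, |M k l|) * |v k| := by rw [Finset.sum_mul]
    have hmu : |μ - M k k| ≤ ∑ l ∈ Finset.univ.erase k, |M k l| :=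
      le_of_mul_le_mul_right habs hkpos
    have h1 := (abs_le.mp hmu).1
    have h2 := h k
    linarith
  have hdet : M.det = ∏ t, hM.eigenvalues t := by
    have := hM.det_eq_prod_eigenvalues
    simpa using this
  rw [hdet]
  calc (c : ℝ) ^ (Fintype.card ι) = ∏ _t : ι, c := by
        rw [Finset.prod_const, Finset.card_univ]
    _ ≤ ∏ t, hM.eigenvalues t :=
        Finset.prod_le_prod (fun t _ => hc) (fun t _ => heig t)

lemma minorDet_empty {n : ℕ} (M : Matrix (Fin n) (Fin n) ℝ) : minorDet M ∅ = M.det := by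
  set e : ↥(((∅ : Finset (Fin n)))ᶜ) ≃ Fin n :=
    { toFun := fun x => (x : Fin n)
      invFun := fun x => ⟨x, by simp⟩
      left_inv := fun x => rfl
      right_inv := fun x => rfl } with he
  have h : minorDet M ∅ = (M.submatrix e e).det := rfl
  rw [h, Matrix.det_submatrix_equiv_self]

lemma minorDet_add_same {n : ℕ} (M : Matrix (Fin n) (Fin n) ℝ) (i : Fin n) (a : ℝ) :
    minorDet (M + a • Matrix.single i i 1) {i} = minorDet M {i} := by
  unfold minorDet
  congr 1
  ext x y
  have hx : (x : Fin n) ≠ i := by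
    have := x.2; simp only [Finset.mem_compl, Finset.mem_singleton] at this; exact this
  simp [Matrix.single, Ne.symm hx]

lemma minorDet_insert {n : ℕ} (M : Matrix (Fin n) (Fin n) ℝ) (i : Fin n)
    (c : Finset (Fin n)) (h : i ∉ c) (a : ℝ) :
    minorDet (M + a • Matrix.single i i 1) c =
      minorDet M c + a * minorDet M (insert i c) := by
  classical
  have hi' : i ∈ cᶜ := Finset.mem_compl.mpr h
  set i' : ↥(cᶜ) := ⟨i, hi'⟩ with hi'def
  have h1 : (M + a • Matrix.single i i 1).submatrix
      (fun x : ↥(cᶜ) => (x : Fin n)) (fun x : ↥(cᶜ) => (x : Fin n)) =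
      M.submatrix (fun x : ↥(cᶜ) => (x : Fin n)) (fun x : ↥(cᶜ) => (x : Fin n))
        + a • Matrix.single i' i' 1 := by
    ext x y
    have hxy : (i = ↑x ∧ i = ↑y) ↔ (i' = x ∧ i' = y) := by
      simp [hi'def, Subtype.ext_iff]
    simp only [Matrix.submatrix_apply, Matrix.add_apply, Matrix.smul_apply,
      Matrix.single, Matrix.of_apply, smul_eq_mul]
    rw [if_congr hxy rfl rfl]
  unfold minorDet
  rw [h1, aux_det_add_single]
  congr 1
  set N := M.submatrix (fun x : ↥(cᶜ) => (x : Fin n)) (fun x : ↥(cᶜ) => (x : Fin n)) with hN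
  let e : ↥(((insert i c))ᶜ) ≃ ↥((({i'} : Finset ↥(cᶜ)))ᶜ) :=
    { toFun := fun x =>
        ⟨⟨(x : Fin n), by
          have := x.2
          simp only [Finset.mem_compl, Finset.mem_insert, not_or] at this
          exact Finset.mem_compl.mpr this.2⟩, by
          have := x.2
          simp only [Finset.mem_compl, Finset.mem_insert, not_or] at this
          simp [hi'def, Subtype.ext_iff, this.1]⟩
      invFun := fun y =>
        ⟨((y : ↥(cᶜ)) : Fin n), by
          have h1 : ((y : ↥(cᶜ)) : Fin n) ∉ c := Finset.mem_compl.mp (y : ↥(cᶜ)).2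
          have h2 : (y : ↥(cᶜ)) ≠ i' := by
            have := y.2; simp only [Finset.mem_compl, Finset.mem_singleton] at this
            exact this
          have h3 : ((y : ↥(cᶜ)) : Fin n) ≠ i := by
            intro hc
            exact h2 (Subtype.ext (by rw [hc, hi'def]))
          simp [Finset.mem_insert, h1, h3]⟩
      left_inv := fun x => rfl
      right_inv := fun y => rfl }
  have h2 : (N.submatrix (fun x : ↥((({i'} : Finset ↥(cᶜ)))ᶜ) => (x : ↥(cᶜ)))
        (fun x : ↥((({i'} : Finset ↥(cᶜ)))ᶜ) => (x : ↥(cᶜ)))).submatrix e e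
      = M.submatrix (fun x : ↥(((insert i c))ᶜ) => (x : Fin n))
          (fun x : ↥(((insert i c))ᶜ) => (x : Fin n)) := by ext x y; rfl
  rw [← Matrix.det_submatrix_equiv_self e, h2]

end Aux

/-- Proposition 3, separation inequality.  Vertices are `0`-indexed:
`Aprev = A(G) + 2d·E + ∑_{t < i} εₜ Eₜ` is the paper's `A⁽ⁱ⁻¹⁾` and
`Acur = Aprev + εᵢ Eᵢ` is the paper's `A⁽ⁱ⁾`.  If the ratios of the minors at `i` and
`j ≠ i` coincide for `Aprev`, then for `Acur` their difference equals
`εᵢ · (A⁽ⁱ⁻¹⁾)_{{i,j}} / det A⁽ⁱ⁾ ≥ εᵢ · d^{n-2}/(3(d+1))ⁿ > 0`; in particular the two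
ratios at step `i` are distinct. -/
theorem prop3_separation {n d N : ℕ} (hn : 2 ≤ n) (hd : 1 ≤ d) (hN : 1 ≤ N)
    (G : SimpleGraph (Fin n)) [DecidableRel G.Adj]
    (hdG : Finset.univ.sup (fun v => G.degree v) = d)
    (i j : Fin n) (hij : j ≠ i)
    (m : Fin n → ℤ) (ε : Fin n → ℝ)
    (hεm : ∀ t, t ≤ i → ε t = (m t : ℝ) / 10 ^ N ∧ 0 < m t ∧ m t < 10 ^ N)
    (Aprev Acur : Matrix (Fin n) (Fin n) ℝ)
    (hAprev : Aprev = G.adjMatrix ℝ + (2 * d : ℝ) • (1 : Matrix (Fin n) (Fin n) ℝ) +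
      ∑ t ∈ Finset.univ.filter (fun t : Fin n => t < i), ε t • Matrix.single t t 1)
    (hAcur : Acur = Aprev + ε i • Matrix.single i i 1)
    (hyp : minorDet Aprev {i} / Aprev.det = minorDet Aprev {j} / Aprev.det) :
    |minorDet Acur {i} / Acur.det - minorDet Acur {j} / Acur.det| =
      ε i * minorDet Aprev {i, j} / Acur.det ∧
    ε i * (d : ℝ) ^ (n - 2) / (3 * ((d : ℝ) + 1)) ^ n ≤
      ε i * minorDet Aprev {i, j} / Acur.det ∧
    0 < ε i * minorDet Aprev {i, j} / Acur.det ∧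
    minorDet Acur {i} / Acur.det ≠ minorDet Acur {j} / Acur.det := by
  classical
  have hd1 : (1 : ℝ) ≤ (d : ℝ) := by exact_mod_cast hd
  have hdpos : (0 : ℝ) < (d : ℝ) := by linarith
  -- bounds on the ε's
  have hεt : ∀ t : Fin n, t ≤ i → 0 < ε t ∧ ε t < 1 := by
    intro t ht
    obtain ⟨he, hm0, hm1⟩ := hεm t ht
    have hp : (0 : ℝ) < 10 ^ N := by positivity
    constructor
    · rw [he]; apply div_pos _ hp; exact_mod_cast hm0
    · rw [he, div_lt_one hp]; exact_mod_cast hm1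
  have hεi0 : 0 < ε i := (hεt i le_rfl).1
  have hεi1 : ε i < 1 := (hεt i le_rfl).2
  -- entries of the diagonal correction sum
  have hSentry : ∀ k l : Fin n,
      (∑ t ∈ Finset.univ.filter (fun t : Fin n => t < i),
        ε t • Matrix.single t t 1) k l
      = if k = l ∧ k < i then ε k else 0 := by
    intro k l
    rw [Matrix.sum_apply]
    have hterm : ∀ t : Fin n, (ε t • Matrix.single t t (1 : ℝ)) k l
        = if t = k ∧ t = l then ε t else 0 := by
      intro t
      simp [Matrix.single, mul_ite]
    by_cases hkl : k = l
    · subst hkl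
      have : ∀ t ∈ Finset.univ.filter (fun t : Fin n => t < i),
          (ε t • Matrix.single t t (1 : ℝ)) k k = if t = k then ε t else 0 := by
        intro t _
        rw [hterm t]
        simp
      rw [Finset.sum_congr rfl this, Finset.sum_ite_eq' _ k ε]
      simp
    · have : ∀ t ∈ Finset.univ.filter (fun t : Fin n => t < i),
          (ε t • Matrix.single t t (1 : ℝ)) k l = 0 := by
        intro t _
        rw [hterm t, if_neg]
        rintro ⟨rfl, rfl⟩
        exact hkl rfl
      rw [Finset.sum_congr rfl this, Finset.sum_const_zero]
      simp [hkl]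
  -- entries of Aprev
  have hApdiag : ∀ k, Aprev k k = 2 * (d : ℝ) + (if k < i then ε k else 0) := by
    intro k
    rw [hAprev]
    simp only [Matrix.add_apply, Matrix.smul_apply, Matrix.one_apply_eq,
      SimpleGraph.adjMatrix_apply, smul_eq_mul, mul_one, hSentry k k]
    simp [G.irrefl]
  have hApoff : ∀ k l, k ≠ l → Aprev k l = if G.Adj k l then 1 else 0 := by
    intro k l hkl
    rw [hAprev]
    simp only [Matrix.add_apply, Matrix.smul_apply, Matrix.one_apply_ne hkl,
      SimpleGraph.adjMatrix_apply, smul_eq_mul, mul_zero, hSentry k l]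
    simp [hkl]
  -- entries of Acur
  have hAcdiag : ∀ k, Acur k k = Aprev k k + (if k = i then ε i else 0) := by
    intro k
    rw [hAcur]
    by_cases hk : k = i
    · subst hk; simp [Matrix.single]
    · simp [Matrix.single, Ne.symm hk, hk]
  have hAcoff : ∀ k l, k ≠ l → Acur k l = Aprev k l := by
    intro k l hkl
    rw [hAcur]
    have : ¬(i = k ∧ i = l) := by rintro ⟨rfl, rfl⟩; exact hkl rfl
    simp [Matrix.single, this]
  -- diagonal bounds
  have hApdiag_lb : ∀ k, 2 * (d : ℝ) ≤ Aprev k k := by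
    intro k
    rw [hApdiag k]
    by_cases hk : k < i
    · have := (hεt k (le_of_lt hk)).1; simp [hk]; linarith
    · simp [hk]
  have hApdiag_ub : ∀ k, Aprev k k ≤ 2 * (d : ℝ) + 1 := by
    intro k
    rw [hApdiag k]
    by_cases hk : k < i
    · have := (hεt k (le_of_lt hk)).2; simp [hk]; linarith
    · simp [hk]
  have hAcdiag_lb : ∀ k, 2 * (d : ℝ) ≤ Acur k k := by
    intro k
    rw [hAcdiag k]
    have := hApdiag_lb k
    by_cases hk : k = i
    · simp [hk]; subst hk; linarith
    · simp [hk]; linarith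
  have hAcdiag_ub : ∀ k, Acur k k ≤ 2 * (d : ℝ) + 1 := by
    intro k
    rw [hAcdiag k]
    by_cases hk : k = i
    · rw [hk, hApdiag i]
      simp [lt_irrefl]
      linarith
    · have := hApdiag_ub k
      simp [hk]; linarith
  -- off-diagonal row sums
  have hdegP : ∀ k, ∑ l ∈ Finset.univ.erase k, |Aprev k l| ≤ (d : ℝ) := by
    intro k
    have h1 : ∀ l ∈ Finset.univ.erase k, |Aprev k l| = if G.Adj k l then (1 : ℝ) else 0 := by
      intro l hl
      have hlk : l ≠ k := Finset.ne_of_mem_erase hl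
      rw [hApoff k l (Ne.symm hlk)]
      split <;> simp
    rw [Finset.sum_congr rfl h1]
    have h2 : ∑ l ∈ Finset.univ.erase k, (if G.Adj k l then (1 : ℝ) else 0)
        = ∑ l, (if G.Adj k l then (1 : ℝ) else 0) := by
      apply Finset.sum_subset (Finset.subset_univ _)
      intro x _ hx
      have hxk : x = k := by
        by_contra hc
        exact hx (Finset.mem_erase.mpr ⟨hc, Finset.mem_univ x⟩)
      subst hxk
      simp [G.irrefl]
    rw [h2, Finset.sum_boole]
    have h3 : (Finset.univ.filter (fun l => G.Adj k l)).card = G.degree k := by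
      rw [SimpleGraph.degree]
      congr 1
      ext l
      simp [SimpleGraph.mem_neighborFinset]
    have h4 : G.degree k ≤ d := hdG ▸ Finset.le_sup (f := fun v => G.degree v) (Finset.mem_univ k)
    rw [h3]
    exact_mod_cast h4
  have hdegC : ∀ k, ∑ l ∈ Finset.univ.erase k, |Acur k l| ≤ (d : ℝ) := by
    intro k
    have : ∀ l ∈ Finset.univ.erase k, |Acur k l| = |Aprev k l| := by
      intro l hl
      rw [hAcoff k l (Ne.symm (Finset.ne_of_mem_erase hl))]
    rw [Finset.sum_congr rfl this]
    exact hdegP k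
  -- symmetry
  have hsymmP : ∀ k l, Aprev k l = Aprev l k := by
    intro k l
    by_cases hkl : k = l
    · rw [hkl]
    · rw [hApoff k l hkl, hApoff l k (Ne.symm hkl)]
      simp [G.adj_comm]
  have hsymmC : ∀ k l, Acur k l = Acur l k := by
    intro k l
    by_cases hkl : k = l
    · rw [hkl]
    · rw [hAcoff k l hkl, hAcoff l k (Ne.symm hkl)]
      exact hsymmP k l
  have hApH : Aprev.IsHermitian := by
    rw [Matrix.IsHermitian]
    ext k l
    simp [Matrix.conjTranspose_apply, hsymmP l k]
  have hAcH : Acur.IsHermitian := by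
    rw [Matrix.IsHermitian]
    ext k l
    simp [Matrix.conjTranspose_apply, hsymmC l k]
  -- determinant lower bounds via Gershgorin
  have hAprow : ∀ k, (d : ℝ) + ∑ l ∈ Finset.univ.erase k, |Aprev k l| ≤ Aprev k k := by
    intro k
    have := hdegP k; have := hApdiag_lb k; linarith
  have hAcrow : ∀ k, (d : ℝ) + ∑ l ∈ Finset.univ.erase k, |Acur k l| ≤ Acur k k := by
    intro k
    have := hdegC k; have := hAcdiag_lb k; linarith
  have hdetAp : (d : ℝ) ^ n ≤ Aprev.det := by
    have := aux_pow_le_det Aprev hApH (d : ℝ) hdpos.le hAprow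
    rwa [Fintype.card_fin] at this
  have hdetAppos : 0 < Aprev.det := lt_of_lt_of_le (by positivity) hdetAp
  have hdetAc : (d : ℝ) ^ n ≤ Acur.det := by
    have := aux_pow_le_det Acur hAcH (d : ℝ) hdpos.le hAcrow
    rwa [Fintype.card_fin] at this
  have hdetAcpos : 0 < Acur.det := lt_of_lt_of_le (by positivity) hdetAc
  -- determinant upper bound
  have hdetAc_ub : Acur.det ≤ (3 * ((d : ℝ) + 1)) ^ n := by
    have h2 : ∀ k, ∑ l, |Acur k l| ≤ 3 * ((d : ℝ) + 1) := by
      intro k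
      have h3 : |Acur k k| + ∑ l ∈ Finset.univ.erase k, |Acur k l| = ∑ l, |Acur k l| :=
        Finset.add_sum_erase _ (fun l => |Acur k l|) (Finset.mem_univ k)
      rw [← h3, abs_of_nonneg (by linarith [hAcdiag_lb k] : (0 : ℝ) ≤ Acur k k)]
      have := hdegC k; have := hAcdiag_ub k; linarith
    calc Acur.det ≤ |Acur.det| := le_abs_self _
      _ ≤ ∏ k, ∑ l, |Acur k l| := aux_abs_det_le Acur
      _ ≤ ∏ _k : Fin n, (3 * ((d : ℝ) + 1)) :=
          Finset.prod_le_prod (fun k _ => Finset.sum_nonneg fun l _ => abs_nonneg _)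
            (fun k _ => h2 k)
      _ = (3 * ((d : ℝ) + 1)) ^ n := by
          rw [Finset.prod_const, Finset.card_univ, Fintype.card_fin]
  -- lower bound on the double minor
  have hQlb : (d : ℝ) ^ (n - 2) ≤ minorDet Aprev {i, j} := by
    set B := Aprev.submatrix
      (fun x : ↥((({i, j} : Finset (Fin n)))ᶜ) => (x : Fin n))
      (fun x : ↥((({i, j} : Finset (Fin n)))ᶜ) => (x : Fin n)) with hB
    have hBH : B.IsHermitian := by
      rw [Matrix.IsHermitian]
      ext x y
      simp [hB, Matrix.conjTranspose_apply, hsymmP]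
    have hBrow : ∀ x, (d : ℝ) + ∑ y ∈ Finset.univ.erase x, |B x y| ≤ B x x := by
      intro x
      have h1 : ∑ y ∈ Finset.univ.erase x, |B x y|
          ≤ ∑ l ∈ Finset.univ.erase (x : Fin n), |Aprev (x : Fin n) l| := by
        have h2 : ∑ y ∈ Finset.univ.erase x, |B x y|
            = ∑ l ∈ (Finset.univ.erase x).image
                (fun y : ↥((({i, j} : Finset (Fin n)))ᶜ) => (y : Fin n)),
                |Aprev (x : Fin n) l| := by
          rw [Finset.sum_image]
          · rfl
          · intro a _ b _ hab
            exact Subtype.coe_injective hab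
        rw [h2]
        apply Finset.sum_le_sum_of_subset_of_nonneg
        · intro l hl
          simp only [Finset.mem_image, Finset.mem_erase, Finset.mem_univ, and_true] at hl
          obtain ⟨y, hy, rfl⟩ := hl
          exact Finset.mem_erase.mpr ⟨fun hc => hy (Subtype.coe_injective hc), Finset.mem_univ _⟩
        · intro l _ _
          exact abs_nonneg _
      have h3 := hdegP (x : Fin n)
      have h4 := hApdiag_lb (x : Fin n)
      have h5 : B x x = Aprev (x : Fin n) (x : Fin n) := rfl
      rw [h5]
      linarith
    have hcard : Fintype.card ↥((({i, j} : Finset (Fin n)))ᶜ) = n - 2 := by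
      rw [Fintype.card_coe, Finset.card_compl, Fintype.card_fin]
      congr 1
      rw [Finset.card_insert_of_notMem (Finset.notMem_singleton.mpr (Ne.symm hij)),
        Finset.card_singleton]
    have := aux_pow_le_det B hBH (d : ℝ) hdpos.le hBrow
    rw [hcard] at this
    exact this
  have hQpos : 0 < minorDet Aprev {i, j} := lt_of_lt_of_le (by positivity) hQlb
  -- key determinant identities
  have hdetsum : Acur.det = Aprev.det + ε i * minorDet Aprev {i} := by
    have h := minorDet_insert Aprev i ∅ (Finset.notMem_empty i) (ε i)
    rw [minorDet_empty, minorDet_empty, insert_empty_eq] at h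
    rw [hAcur]
    exact h
  have hminj : minorDet Acur {j} = minorDet Aprev {j} + ε i * minorDet Aprev {i, j} := by
    have h := minorDet_insert Aprev i {j} (Finset.notMem_singleton.mpr (Ne.symm hij)) (ε i)
    rw [hAcur]
    exact h
  have hmini : minorDet Acur {i} = minorDet Aprev {i} := by
    rw [hAcur]
    exact minorDet_add_same Aprev i (ε i)
  have hPij : minorDet Aprev {i} = minorDet Aprev {j} := by
    have h := hyp
    field_simp [hdetAppos.ne'] at h
    exact h
  -- final computation
  have hdiff : minorDet Acur {i} / Acur.det - minorDet Acur {j} / Acur.det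
      = -(ε i * minorDet Aprev {i, j} / Acur.det) := by
    rw [hmini, hminj, hPij, div_sub_div_same]
    ring
  have hpos : 0 < ε i * minorDet Aprev {i, j} / Acur.det :=
    div_pos (mul_pos hεi0 hQpos) hdetAcpos
  have habs : |minorDet Acur {i} / Acur.det - minorDet Acur {j} / Acur.det|
      = ε i * minorDet Aprev {i, j} / Acur.det := by
    rw [hdiff, abs_neg, abs_of_pos hpos]
  have hineq : ε i * (d : ℝ) ^ (n - 2) / (3 * ((d : ℝ) + 1)) ^ n
      ≤ ε i * minorDet Aprev {i, j} / Acur.det :=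
    div_le_div₀ (le_of_lt (mul_pos hεi0 hQpos))
      (mul_le_mul_of_nonneg_left hQlb hεi0.le) hdetAcpos hdetAc_ub
  refine ⟨habs, hineq, hpos, ?_⟩
  intro hc
  have h0 : (0 : ℝ) = ε i * minorDet Aprev {i, j} / Acur.det := by
    rw [← habs, hc, sub_self, abs_zero]
  exact hpos.ne' h0.symm
end

section
/- Let G and H be simple graphs on the vertex set {1,…,n}, let φ be a bijection of {1,…,n} onto itself that is NOT an isomorphism of G onto H, and let S be a nonempty finite set of real numbers. Then the number of points (ε_1, …, ε_n) ∈ S^n satisfying det(A(G) + diag(ε_1,…,ε_n)) = det(A(H) + P_φ diag(ε_1,…,ε_n) P_φ^⊤) is at most n·|S|^{n-1}. (Hence for ε_1,…,ε_n selected independently and uniformly from S, the probability of this equality is at most n/|S|.) -/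
/-!
Conjugating `diag ε` by `P_φ` relabels the vertices of `H` by `φ`, so the two determinants are
the evaluations at `ε` of `det (A(G) + diag X)` and `det (A(H ∘ φ) + diag X)` in
`ℝ[X₁, …, Xₙ]`. For a matrix `A` with zero diagonal, the term of a permutation `σ` in
`det (A + diag X)` is a multiple of `∏_{k fixed by σ} X k`, so the coefficient of
`∏_{k ∉ {i, j}} X k` comes from the transposition `(i j)` alone and is `-A i j * A j i`.
If `φ` breaks the adjacency of `i` and `j`, this coefficient is `-1` in one determinant and `0`
in the other. Their difference is thus a nonzero polynomial of total degree at most `n`, and the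
Schwartz–Zippel lemma bounds its zeros in `Sⁿ`.
-/

open scoped Matrix

open Finset Equiv MvPolynomial Matrix

namespace MvPolynomial

variable {σ R : Type*} [CommSemiring R] [DecidableEq σ]

lemma sum_single_one_apply (s : Finset σ) (k : σ) :
    (∑ i ∈ s, Finsupp.single i 1 : σ →₀ ℕ) k = if k ∈ s then 1 else 0 := by
  simp [Finsupp.finsetSum_apply, Finsupp.single_apply]

lemma sum_single_one_injective :
    Function.Injective fun s : Finset σ => (∑ i ∈ s, Finsupp.single i 1 : σ →₀ ℕ) := by
  intro s t h
  ext k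
  have hk := DFunLike.congr_fun h k
  simp only [sum_single_one_apply] at hk
  split_ifs at hk <;> simp_all

lemma coeff_prod_X (s t : Finset σ) :
    coeff (∑ i ∈ t, Finsupp.single i 1) (∏ i ∈ s, X i : MvPolynomial σ R) =
      if s = t then 1 else 0 := by
  rw [show (∏ i ∈ s, X i : MvPolynomial σ R) = ∏ i ∈ s, monomial (Finsupp.single i 1) 1 from rfl,
    ← monomial_sum_one, coeff_monomial]
  exact if_congr sum_single_one_injective.eq_iff rfl rfl

lemma card_filter_eval_eq_zero_mul_card_le {R : Type*} [CommRing R] [IsDomain R] [DecidableEq R]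
    {n : ℕ} {p : MvPolynomial (Fin n) R} (hp : p ≠ 0) (S : Finset R) :
    #{x ∈ Fintype.piFinset fun _ => S | eval x p = 0} * #S ≤ p.totalDegree * #S ^ n := by
  obtain rfl | hS := S.eq_empty_or_nonempty
  · simp
  have h := schwartz_zippel_totalDegree hp S
  rw [div_le_div_iff₀ (by positivity) (by exact_mod_cast hS.card_pos)] at h
  exact_mod_cast h

end MvPolynomial

namespace Equiv.Perm

variable {α : Type*} [Fintype α] [DecidableEq α]

lemma apply_eq_of_support_eq_pair {σ : Perm α} {i j : α} (h : σ.support = {i, j}) :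
    σ i = j := by
  have hσi : σ i ∈ σ.support := apply_mem_support.mpr (by simp [h])
  rw [h, mem_insert, mem_singleton] at hσi
  exact hσi.resolve_left (mem_support.mp (by simp [h]))

lemma support_eq_pair_iff {σ : Perm α} {i j : α} (hij : i ≠ j) :
    σ.support = {i, j} ↔ σ = swap i j := by
  refine ⟨fun h => ?_, fun h => h ▸ support_swap hij⟩
  ext k
  by_cases hki : k = i
  · simp [hki, apply_eq_of_support_eq_pair h]
  by_cases hkj : k = j
  · simp [hkj, apply_eq_of_support_eq_pair (h.trans (pair_comm i j))]
  rw [swap_apply_of_ne_of_ne hki hkj, ← notMem_support, h]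
  simp [hki, hkj]

end Equiv.Perm

namespace Matrix

variable {n R : Type*} [Fintype n] [DecidableEq n] [CommRing R]

noncomputable def detAddDiagonalX (A : Matrix n n R) : MvPolynomial n R :=
  (A.map C + diagonal X).det

lemma eval_detAddDiagonalX (A : Matrix n n R) (ε : n → R) :
    eval ε A.detAddDiagonalX = (A + diagonal ε).det := by
  rw [detAddDiagonalX, RingHom.map_det]
  congr 1
  ext i j
  by_cases hij : i = j
  · subst hij; simp
  · simp [hij]

lemma prod_map_C_add_diagonal_X {A : Matrix n n R} (hA : ∀ k, A k k = 0) (σ : Perm n) :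
    ∏ k, (A.map C + diagonal X : Matrix n n (MvPolynomial n R)) (σ k) k =
      C (∏ k ∈ σ.support, A (σ k) k) * ∏ k ∈ σ.supportᶜ, X k := by
  rw [← prod_mul_prod_compl σ.support, map_prod]
  congr 1
  · refine prod_congr rfl fun k hk => ?_
    simp [diagonal_apply_ne _ (Perm.mem_support.mp hk)]
  · refine prod_congr rfl fun k hk => ?_
    rw [mem_compl, Perm.notMem_support] at hk
    simp [hk, hA]

lemma detAddDiagonalX_eq_sum {A : Matrix n n R} (hA : ∀ k, A k k = 0) :
    A.detAddDiagonalX = ∑ σ : Perm n,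
      C ((Perm.sign σ : R) * ∏ k ∈ σ.support, A (σ k) k) * ∏ k ∈ σ.supportᶜ, X k := by
  rw [detAddDiagonalX, det_apply']
  refine sum_congr rfl fun σ _ => ?_
  rw [prod_map_C_add_diagonal_X hA, map_mul, mul_assoc, map_intCast]

lemma totalDegree_detAddDiagonalX_le {A : Matrix n n R} (hA : ∀ k, A k k = 0) :
    A.detAddDiagonalX.totalDegree ≤ Fintype.card n := by
  rw [detAddDiagonalX_eq_sum hA]
  refine (totalDegree_finsetSum _ _).trans (Finset.sup_le fun σ _ => ?_)
  calc _ ≤ (C _ : MvPolynomial n R).totalDegree +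
          (∏ k ∈ σ.supportᶜ, X k : MvPolynomial n R).totalDegree :=
        totalDegree_mul _ _
    _ ≤ 0 + ∑ _k ∈ σ.supportᶜ, 1 := by
        gcongr
        · rw [totalDegree_C]
        · refine (totalDegree_finsetProd _ _).trans (sum_le_sum fun k _ => ?_)
          exact (totalDegree_monomial_le _ _).trans (by simp)
    _ ≤ Fintype.card n := by
        simpa using card_le_univ _

lemma coeff_detAddDiagonalX_compl_pair {A : Matrix n n R} (hA : ∀ k, A k k = 0) {i j : n}
    (hij : i ≠ j) :
    coeff (∑ k ∈ {i, j}ᶜ, Finsupp.single k 1) A.detAddDiagonalX = -(A i j * A j i) := by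
  rw [detAddDiagonalX_eq_sum hA, coeff_sum]
  simp_rw [coeff_C_mul, coeff_prod_X, compl_inj_iff, Perm.support_eq_pair_iff hij, mul_ite,
    mul_one, mul_zero]
  rw [sum_ite_eq', if_pos (mem_univ _), Perm.sign_swap hij, Perm.support_swap hij, prod_pair hij]
  simp [mul_comm]

end Matrix

lemma permMatrix_eq_permMatrix_inv {n : ℕ} (φ : Perm (Fin n)) :
    permMatrix φ = φ⁻¹.permMatrix ℝ := by
  ext i j
  simp [permMatrix, PEquiv.toMatrix_apply, Perm.inv_def, symm_apply_eq]

lemma det_add_permMatrix_conj_diagonal {n : ℕ} (A : Matrix (Fin n) (Fin n) ℝ)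
    (φ : Perm (Fin n)) (ε : Fin n → ℝ) :
    (A + permMatrix φ * diagonal ε * (permMatrix φ)ᵀ).det =
      (A.submatrix φ φ + diagonal ε).det := by
  rw [permMatrix_eq_permMatrix_inv, transpose_permMatrix, inv_inv, PEquiv.toMatrix_toPEquiv_mul,
    PEquiv.mul_toMatrix_toPEquiv, ← det_submatrix_equiv_self φ⁻¹ (A.submatrix φ φ + diagonal ε)]
  congr 1
  ext i j
  simp [diagonal_apply]

namespace SimpleGraph

variable {V R : Type*} [CommRing R]

lemma adjMatrix_submatrix (G : SimpleGraph V) [DecidableRel G.Adj] (φ : Perm V) :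
    (G.adjMatrix R).submatrix φ φ = (G.comap φ).adjMatrix R := by
  ext i j
  simp

variable [Fintype V] [DecidableEq V]

lemma coeff_detAddDiagonalX_adjMatrix (G : SimpleGraph V) [DecidableRel G.Adj] {i j : V}
    (hij : i ≠ j) :
    coeff (∑ k ∈ {i, j}ᶜ, Finsupp.single k 1) (G.adjMatrix R).detAddDiagonalX =
      if G.Adj i j then -1 else 0 := by
  rw [coeff_detAddDiagonalX_compl_pair (G.isAdjMatrix_adjMatrix (α := R)).apply_diag hij]
  by_cases h : G.Adj i j <;> simp [h, G.adj_comm j i]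

lemma totalDegree_detAddDiagonalX_adjMatrix_le (G : SimpleGraph V) [DecidableRel G.Adj] :
    (G.adjMatrix R).detAddDiagonalX.totalDegree ≤ Fintype.card V :=
  totalDegree_detAddDiagonalX_le (G.isAdjMatrix_adjMatrix (α := R)).apply_diag

end SimpleGraph

open Classical in
/-- Schwartz–Zippel bound: if `φ` is not an isomorphism of `G` onto `H`
and `S` is a nonempty finite set of reals, then at most `n·|S|^{n-1}` of the points
`ε ∈ Sⁿ` satisfy `det (A(G) + diag ε) = det (A(H) + P_φ (diag ε) P_φᵀ)`. -/
theorem schwartz_zippel_count_bound {n : ℕ} (G H : SimpleGraph (Fin n))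
    [DecidableRel G.Adj] [DecidableRel H.Adj] (φ : Equiv.Perm (Fin n))
    (hφ : ¬ ∀ i j, G.Adj i j ↔ H.Adj (φ i) (φ j))
    (S : Finset ℝ) (hS : S.Nonempty) :
    ((Fintype.piFinset fun _ : Fin n => S).filter fun ε =>
        (G.adjMatrix ℝ + Matrix.diagonal ε).det =
          (H.adjMatrix ℝ + permMatrix φ * Matrix.diagonal ε * (permMatrix φ)ᵀ).det).card
      ≤ n * S.card ^ (n - 1) := by
  obtain ⟨i, j, hφij⟩ : ∃ i j, ¬ (G.Adj i j ↔ H.Adj (φ i) (φ j)) := by simpa using hφ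
  have hij : i ≠ j := by rintro rfl; simp at hφij
  set f := (G.adjMatrix ℝ).detAddDiagonalX - ((H.comap φ).adjMatrix ℝ).detAddDiagonalX
  have hf : f ≠ 0 := by
    refine ne_of_apply_ne (coeff (∑ k ∈ {i, j}ᶜ, Finsupp.single k 1)) ?_
    rw [coeff_sub, G.coeff_detAddDiagonalX_adjMatrix hij,
      (H.comap φ).coeff_detAddDiagonalX_adjMatrix hij, coeff_zero]
    by_cases hG : G.Adj i j <;> simp_all
  have hdeg : f.totalDegree ≤ Fintype.card (Fin n) := (totalDegree_sub _ _).trans <|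
    max_le (G.totalDegree_detAddDiagonalX_adjMatrix_le (R := ℝ))
      ((H.comap φ).totalDegree_detAddDiagonalX_adjMatrix_le (R := ℝ))
  have hzeros : ((Fintype.piFinset fun _ : Fin n => S).filter fun ε =>
        (G.adjMatrix ℝ + Matrix.diagonal ε).det =
          (H.adjMatrix ℝ + permMatrix φ * Matrix.diagonal ε * (permMatrix φ)ᵀ).det) =
      {ε ∈ Fintype.piFinset fun _ : Fin n => S | eval ε f = 0} :=
    filter_congr fun ε _ => by
      rw [eval_sub, sub_eq_zero, eval_detAddDiagonalX, eval_detAddDiagonalX,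
        det_add_permMatrix_conj_diagonal, SimpleGraph.adjMatrix_submatrix]
  refine Nat.le_of_mul_le_mul_right ?_ hS.card_pos
  calc _ ≤ f.totalDegree * #S ^ n := by
        rw [hzeros]; convert card_filter_eval_eq_zero_mul_card_le hf S
    _ ≤ n * #S ^ n := by gcongr; simpa using hdeg
    _ = n * #S ^ (n - 1) * #S := by rw [mul_assoc, ← pow_succ, Nat.sub_add_cancel i.pos]
end
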